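/- There is an absolute constant C > 0 with the following property. Let Q, N ∈ ℕ, let a, b be integers, and for primes p, q with p ≡ 1 (mod 4) and q ≡ 1 (mod 4) and gcd(pq, Q) = 1, define w_{N,Q}(p,q) := (1/N²)·#{ (m,n) ∈ [N]² : p exactly divides (Qm+a)² + (Qn+b)² and q exactly divides (Qm+a)² + (Qn+b)² }, where 'p exactly divides k' means p | k and p² ∤ k. Then | w_{N,Q}(p,p) − (2/p)·(1 − 1/p)² | ≤ C/N, and if p ≠ q then | w_{N,Q}(p,q) − (4/(pq))·(1 − 1/p)²·(1 − 1/q)² | ≤ C/N. -/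

import Mathlib

/-- `p` exactly divides `k`: `p ∣ k` but `p² ∤ k`. -/
def ExactlyDivides (p k : ℤ) : Prop := p ∣ k ∧ ¬ (p ^ 2 ∣ k)

-- The normalized count `w_{N,Q}(p,q)` of pairs `(m,n) ∈ [N]²` such that both `p` and `q`
-- exactly divide `(Qm+a)² + (Qn+b)²`.
open scoped Classical in
noncomputable def wPair (Q N : ℕ) (a b : ℤ) (p q : ℕ) : ℝ :=
  (((Finset.Icc 1 N ×ˢ Finset.Icc 1 N).filter (fun mn : ℕ × ℕ =>
      ExactlyDivides (p : ℤ) (((Q : ℤ) * mn.1 + a) ^ 2 + ((Q : ℤ) * mn.2 + b) ^ 2) ∧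
      ExactlyDivides (q : ℤ) (((Q : ℤ) * mn.1 + a) ^ 2 + ((Q : ℤ) * mn.2 + b) ^ 2))).card : ℝ) /
    (N : ℝ) ^ 2


/-!
Since `p ≡ 1 (mod 4)`, some `J` satisfies `p² ∣ J² + 1` (a square root of `-1` modulo `p`, lifted
by one Newton step). Then `x² + y² ≡ (y - J x) (y + J x) (mod p²)`, so `p ∥ x² + y²` iff `p ∤ x`
and `p` exactly divides one of `y ∓ J x`, the two cases being disjoint. For `x = Qm + a`,
`y = Qn + b` with `p ∤ Q`, each case says that `m` avoids one class modulo `p` and that `n` lies in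
one class modulo `p` but not in one modulo `p²`, these classes depending on `m`. A residue class
meets `[1, N]` in `N / M + O(1)` points, so summing over the rows `m` gives the main term up to an
error `O(N)` that is uniform in `p, q, Q, a, b`. For two primes the congruences combine by the
Chinese remainder theorem.
-/

open Finset

open Classical in
def CountApprox {α : Type*} (s : Finset α) (P : α → Prop) (c E : ℝ) : Prop :=
  |(#{x ∈ s | P x} : ℝ) - c| ≤ E

theorem countApprox_iff {α : Type*} {s : Finset α} {P : α → Prop} [DecidablePred P] {c E : ℝ} :
    CountApprox s P c E ↔ |(#{x ∈ s | P x} : ℝ) - c| ≤ E := by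
  unfold CountApprox
  convert Iff.rfl

namespace CountApprox

variable {α β : Type*} {s : Finset α} {P P' : α → Prop} {c c' E E' : ℝ}

theorem nonneg (h : CountApprox s P c E) : 0 ≤ E :=
  (abs_nonneg _).trans h

theorem congr (h : CountApprox s P c E) (hP : ∀ x ∈ s, P x ↔ P' x) (hc : c = c') :
    CountApprox s P' c' E := by
  classical
  rw [countApprox_iff] at *
  rwa [← hc, ← filter_congr hP]

theorem mono (h : CountApprox s P c E) (hE : E ≤ E') : CountApprox s P c E' :=
  h.trans hE

theorem compl (h : CountApprox s P c E) : CountApprox s (fun x => ¬ P x) (#s - c) E := by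
  classical
  rw [countApprox_iff] at *
  rw [← card_filter_add_card_filter_not (s := s) P, ← abs_neg]
  convert h using 2
  push_cast
  ring

theorem or (h : CountApprox s P c E) (h' : CountApprox s P' c' E')
    (hdisj : ∀ x ∈ s, P x → ¬ P' x) :
    CountApprox s (fun x => P x ∨ P' x) (c + c') (E + E') := by
  classical
  rw [countApprox_iff] at *
  rw [filter_or, card_union_of_disjoint (disjoint_filter.2 hdisj), Nat.cast_add,
    add_sub_add_comm]
  exact (abs_add_le _ _).trans (add_le_add h h')

theorem and_not (h : CountApprox s P c E) (h' : CountApprox s P' c' E')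
    (himp : ∀ x ∈ s, P' x → P x) :
    CountApprox s (fun x => P x ∧ ¬ P' x) (c - c') (E + E') := by
  classical
  rw [countApprox_iff] at *
  rw [filter_and_not, card_sdiff_of_subset (monotone_filter_right s himp), Nat.cast_sub
    (card_le_card (monotone_filter_right s himp)), sub_sub_sub_comm]
  exact (abs_sub _ _).trans (add_le_add h h')

theorem prod {t : Finset β} {R : α → β → Prop} (h : CountApprox s P c E)
    (h' : ∀ a, CountApprox t (R a) c' E') (hc' : 0 ≤ c') :
    CountApprox (s ×ˢ t) (fun x => P x.1 ∧ R x.1 x.2) (c * c') (#s * E' + E * c') := by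
  classical
  rw [countApprox_iff] at h ⊢
  simp only [countApprox_iff] at h'
  have hfiber : (#{x ∈ s ×ˢ t | P x.1 ∧ R x.1 x.2} : ℝ) =
      ∑ a ∈ s with P a, (#{b ∈ t | R a b} : ℝ) := by
    rw [card_filter, sum_product, sum_filter]
    push_cast
    refine sum_congr rfl fun a _ => ?_
    split_ifs with ha <;> simp [ha]
  rw [hfiber]
  calc |∑ a ∈ s with P a, (#{b ∈ t | R a b} : ℝ) - c * c'|
      = |∑ a ∈ s with P a, ((#{b ∈ t | R a b} : ℝ) - c') + (#{a ∈ s | P a} - c) * c'| := by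
        rw [sum_sub_distrib, sum_const, nsmul_eq_mul]; ring_nf
    _ ≤ ∑ a ∈ s, |(#{b ∈ t | R a b} : ℝ) - c'| + E * c' := by
        refine (abs_add_le _ _).trans (add_le_add ?_ ?_)
        · exact (abs_sum_le_sum_abs _ _).trans
            (sum_le_sum_of_subset_of_nonneg (filter_subset _ _) fun _ _ _ => abs_nonneg _)
        · rw [abs_mul, abs_of_nonneg hc']
          exact mul_le_mul_of_nonneg_right h hc'
    _ ≤ #s * E' + E * c' := by
        gcongr
        exact (sum_le_card_nsmul _ _ _ fun a _ => h' a).trans_eq (nsmul_eq_mul _ _)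

theorem prod_Icc {N : ℕ} {P : ℕ → Prop} {R : ℕ → ℕ → Prop} {ρ ρ' : ℝ}
    (h : CountApprox (Icc 1 N) P (N * ρ) E) (h' : ∀ m, CountApprox (Icc 1 N) (R m) (N * ρ') E')
    (hρ' : ρ' ∈ unitInterval) :
    CountApprox (Icc 1 N ×ˢ Icc 1 N) (fun x => P x.1 ∧ R x.1 x.2) (N ^ 2 * (ρ * ρ'))
      ((E + E') * N) := by
  refine ((h.prod h' (mul_nonneg N.cast_nonneg hρ'.1)).congr (fun _ _ => Iff.rfl) (by ring)).mono ?_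
  have := mul_le_mul_of_nonneg_left hρ'.2 (mul_nonneg h.nonneg N.cast_nonneg)
  simp only [Nat.card_Icc, add_tsub_cancel_right]
  linarith

end CountApprox

theorem natCast_inv_mem_unitInterval (p : ℕ) : (p : ℝ)⁻¹ ∈ unitInterval :=
  ⟨by positivity, Nat.cast_inv_le_one p⟩

theorem countApprox_Icc_modEq {M : ℕ} (hM : 0 < M) (N v : ℕ) :
    CountApprox (Icc 1 N) (· ≡ v [MOD M]) (N * (M : ℝ)⁻¹) 1 := by
  rw [countApprox_iff]
  have hcard := Nat.Ioc_filter_modEq_card 0 N hM v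
  set x : ℚ := ((0 : ℕ) - v) / M
  set y : ℚ := (N - v) / M
  have hxy : y - x = N / M := by simp only [x, y]; push_cast; ring
  have hle : ⌊x⌋ ≤ ⌊y⌋ := Int.floor_mono (by rw [← sub_nonneg, hxy]; positivity)
  rw [max_eq_left (sub_nonneg.2 hle)] at hcard
  have key : |((⌊y⌋ - ⌊x⌋ : ℤ) : ℚ) - N / M| ≤ 1 := by
    rw [abs_le]
    constructor <;> push_cast <;>
      linarith [Int.floor_le x, Int.floor_le y, Int.lt_floor_add_one x, Int.lt_floor_add_one y]
  rw [← hcard, ← Icc_add_one_left_eq_Ioc] at key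
  simpa [div_eq_mul_inv] using (Rat.cast_le (K := ℝ)).2 key

theorem exists_forall_dvd_mul_add_iff_modEq {M : ℕ} [NeZero M] {Q : ℤ} (hQ : IsCoprime Q M)
    (d : ℤ) :
    ∃ v : ℕ, ∀ n : ℕ, (M : ℤ) ∣ Q * n + d ↔ n ≡ v [MOD M] := by
  obtain ⟨u, w, huw⟩ := hQ
  have hu : (u : ZMod M) * Q = 1 := by
    simpa using congrArg (Int.cast : ℤ → ZMod M) huw
  refine ⟨((-(d * u) : ℤ) : ZMod M).val, fun n => ?_⟩
  rw [← ZMod.intCast_zmod_eq_zero_iff_dvd, ← ZMod.natCast_eq_natCast_iff, ZMod.natCast_val,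
    ZMod.cast_id', id]
  push_cast
  constructor <;> intro h
  · linear_combination u * h - n * hu
  · linear_combination Q * h - d * hu

section LinearForms

variable {Q : ℤ}

theorem countApprox_dvd_mul_add {M : ℕ} (hM : 0 < M) (hQ : IsCoprime Q M) (d : ℤ) (N : ℕ) :
    CountApprox (Icc 1 N) (fun n : ℕ => (M : ℤ) ∣ Q * n + d) (N * (M : ℝ)⁻¹) 1 := by
  have : NeZero M := ⟨hM.ne'⟩
  obtain ⟨v, hv⟩ := exists_forall_dvd_mul_add_iff_modEq hQ d
  exact (countApprox_Icc_modEq hM N v).congr (fun n _ => (hv n).symm) rfl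

theorem countApprox_not_dvd_mul_add {M : ℕ} (hM : 0 < M) (hQ : IsCoprime Q M) (d : ℤ) (N : ℕ) :
    CountApprox (Icc 1 N) (fun n : ℕ => ¬ (M : ℤ) ∣ Q * n + d) (N * (1 - (M : ℝ)⁻¹)) 1 :=
  (countApprox_dvd_mul_add hM hQ d N).compl.congr (fun _ _ => Iff.rfl) (by simp; ring)

theorem countApprox_dvd_and_dvd {A B : ℕ} (hA : 0 < A) (hB : 0 < B) (hQA : IsCoprime Q A)
    (hQB : IsCoprime Q B) (hAB : IsCoprime (A : ℤ) B) (d₁ d₂ : ℤ) (N : ℕ) :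
    CountApprox (Icc 1 N) (fun n : ℕ => (A : ℤ) ∣ Q * n + d₁ ∧ (B : ℤ) ∣ Q * n + d₂)
      (N * ((A : ℝ)⁻¹ * (B : ℝ)⁻¹)) 1 := by
  obtain ⟨u, v, huv⟩ := id hAB
  have h₁ (n : ℕ) : (A : ℤ) ∣ Q * n + (d₁ * (v * B) + d₂ * (u * A)) - (Q * n + d₁) :=
    ⟨(d₂ - d₁) * u, by linear_combination d₁ * huv⟩
  have h₂ (n : ℕ) : (B : ℤ) ∣ Q * n + (d₁ * (v * B) + d₂ * (u * A)) - (Q * n + d₂) :=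
    ⟨(d₁ - d₂) * v, by linear_combination d₂ * huv⟩
  refine (countApprox_dvd_mul_add (Nat.mul_pos hA hB) (by push_cast; exact hQA.mul_right hQB)
    (d₁ * (v * B) + d₂ * (u * A)) N).congr (fun n _ => ?_) (by push_cast; ring)
  rw [← dvd_iff_dvd_of_dvd_sub (h₁ n), ← dvd_iff_dvd_of_dvd_sub (h₂ n), Nat.cast_mul]
  exact ⟨fun h => ⟨(dvd_mul_right _ _).trans h, (dvd_mul_left _ _).trans h⟩,
    fun h => hAB.mul_dvd h.1 h.2⟩

theorem countApprox_exactlyDivides_mul_add {p : ℕ} (hp : 0 < p) (hQ : IsCoprime Q p) (d : ℤ)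
    (N : ℕ) :
    CountApprox (Icc 1 N) (fun n : ℕ => ExactlyDivides p (Q * n + d))
      (N * ((p : ℝ)⁻¹ * (1 - (p : ℝ)⁻¹))) 2 := by
  have hQ2 : IsCoprime Q ((p ^ 2 : ℕ) : ℤ) := by push_cast; exact hQ.pow_right
  refine (((countApprox_dvd_mul_add hp hQ d N).and_not
    (countApprox_dvd_mul_add (pow_pos hp 2) hQ2 d N) fun n _ h => ?_).congr
    (fun n _ => by simp [ExactlyDivides]) (by push_cast; ring)).mono (by norm_num)
  push_cast at h
  exact (dvd_pow_self _ two_ne_zero).trans h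

theorem countApprox_exactlyDivides_and_exactlyDivides {p q : ℕ} (hp : 0 < p) (hq : 0 < q)
    (hQp : IsCoprime Q p) (hQq : IsCoprime Q q) (hpq : IsCoprime (p : ℤ) q) (d₁ d₂ : ℤ)
    (N : ℕ) :
    CountApprox (Icc 1 N)
      (fun n : ℕ => ExactlyDivides p (Q * n + d₁) ∧ ExactlyDivides q (Q * n + d₂))
      (N * ((p : ℝ)⁻¹ * (1 - (p : ℝ)⁻¹) * ((q : ℝ)⁻¹ * (1 - (q : ℝ)⁻¹)))) 4 := by
  have count (i j : ℕ) := countApprox_dvd_and_dvd (pow_pos hp i) (pow_pos hq j)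
    (by push_cast; exact hQp.pow_right) (by push_cast; exact hQq.pow_right)
    (by push_cast; exact hpq.pow) d₁ d₂ N
  have c₁₁ := count 1 1
  have c₁₂ := count 1 2
  have c₂₁ := count 2 1
  simp only [Nat.cast_pow, pow_one] at c₁₁ c₁₂ c₂₁ count
  have hp₂ {k : ℤ} (h : (p : ℤ) ^ 2 ∣ k) : (p : ℤ) ∣ k := (dvd_pow_self _ two_ne_zero).trans h
  have hq₂ {k : ℤ} (h : (q : ℤ) ^ 2 ∣ k) : (q : ℤ) ∣ k := (dvd_pow_self _ two_ne_zero).trans h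
  refine (((c₁₁.and_not c₁₂ fun n _ h => ⟨h.1, hq₂ h.2⟩).and_not
    (c₂₁.and_not (count 2 2) fun n _ h => ⟨h.1, hq₂ h.2⟩) fun n _ h => ?_).congr
    (fun n _ => ?_) (by ring)).mono (by norm_num)
  · have := @hp₂ (Q * n + d₁)
    tauto
  · have := @hp₂ (Q * n + d₁)
    have := @hq₂ (Q * n + d₂)
    simp only [ExactlyDivides]
    tauto

theorem countApprox_not_dvd_and_not_dvd {p q : ℕ} (hp : 0 < p) (hq : 0 < q)
    (hQp : IsCoprime Q p) (hQq : IsCoprime Q q) (hpq : IsCoprime (p : ℤ) q) (d : ℤ) (N : ℕ) :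
    CountApprox (Icc 1 N) (fun n : ℕ => ¬ (p : ℤ) ∣ Q * n + d ∧ ¬ (q : ℤ) ∣ Q * n + d)
      (N * ((1 - (p : ℝ)⁻¹) * (1 - (q : ℝ)⁻¹))) 3 :=
  (((countApprox_dvd_mul_add hp hQp d N).or
    ((countApprox_dvd_mul_add hq hQq d N).and_not
      (countApprox_dvd_and_dvd hp hq hQp hQq hpq d d N) fun _ _ h => h.2)
    fun _ _ h h' => h'.2 ⟨h, h'.1⟩).compl.congr (fun _ _ => by tauto) (by simp; ring)).mono
    (by norm_num)

end LinearForms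

theorem exactlyDivides_iff_of_sq_dvd_sub {p k k' : ℤ} (h : p ^ 2 ∣ k - k') :
    ExactlyDivides p k ↔ ExactlyDivides p k' :=
  and_congr (dvd_iff_dvd_of_dvd_sub ((dvd_pow_self p two_ne_zero).trans h))
    (not_congr (dvd_iff_dvd_of_dvd_sub h))

theorem exactlyDivides_mul_iff {p u v : ℤ} (hp : Prime p) (h : ¬ (p ∣ u ∧ p ∣ v)) :
    ExactlyDivides p (u * v) ↔ ExactlyDivides p u ∨ ExactlyDivides p v := by
  constructor
  · rintro ⟨hdvd, hsq⟩
    rcases hp.dvd_or_dvd hdvd with hu | hv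
    · exact Or.inl ⟨hu, fun hu₂ => hsq (hu₂.mul_right v)⟩
    · exact Or.inr ⟨hv, fun hv₂ => hsq (hv₂.mul_left u)⟩
  · rintro (⟨hu, hu₂⟩ | ⟨hv, hv₂⟩)
    · exact ⟨hu.mul_right v,
        fun h₂ => hu₂ (hp.pow_dvd_of_dvd_mul_right 2 (fun hv => h ⟨hu, hv⟩) h₂)⟩
    · exact ⟨hv.mul_left u,
        fun h₂ => hv₂ (hp.pow_dvd_of_dvd_mul_left 2 (fun hu => h ⟨hu, hv⟩) h₂)⟩

theorem dvd_of_dvd_sub_mul_of_dvd_add_mul {p J x y : ℤ} (hp : Prime p) (hp2 : ¬ p ∣ 2)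
    (hJ : p ∣ J ^ 2 + 1) (h₁ : p ∣ y - J * x) (h₂ : p ∣ y + J * x) : p ∣ x := by
  have h2x : p ∣ 2 * x := by
    have := dvd_sub (hJ.mul_left (2 * x)) ((dvd_sub h₂ h₁).mul_left J)
    rwa [show 2 * x * (J ^ 2 + 1) - J * (y + J * x - (y - J * x)) = 2 * x by ring] at this
  exact (hp.dvd_or_dvd h2x).resolve_left hp2

/-- Modulo `p ^ 2`, `x ^ 2 + y ^ 2 ≡ (y - J x) (y + J x)`, and for `p ∤ x` at most one of the
two factors is divisible by `p`. -/
theorem exactlyDivides_sq_add_sq_iff {p J : ℤ} (hp : Prime p) (hp2 : ¬ p ∣ 2)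
    (hJ : p ^ 2 ∣ J ^ 2 + 1) (x y : ℤ) :
    ExactlyDivides p (x ^ 2 + y ^ 2) ↔
      ¬ p ∣ x ∧ (ExactlyDivides p (y - J * x) ∨ ExactlyDivides p (y + J * x)) := by
  have hJp : p ∣ J ^ 2 + 1 := (dvd_pow_self p two_ne_zero).trans hJ
  rw [exactlyDivides_iff_of_sq_dvd_sub (k' := (y - J * x) * (y + J * x))
    (by rw [show x ^ 2 + y ^ 2 - (y - J * x) * (y + J * x) = (J ^ 2 + 1) * x ^ 2 by ring]
        exact hJ.mul_right _)]
  by_cases hx : p ∣ x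
  · simp only [hx, not_true_eq_false, false_and, iff_false]
    rintro ⟨hdvd, hsq⟩
    have hsame : p ∣ y - J * x ↔ p ∣ y + J * x := dvd_iff_dvd_of_dvd_sub
      (by rw [show y - J * x - (y + J * x) = -2 * J * x by ring]; exact hx.mul_left _)
    rcases hp.dvd_or_dvd hdvd with h | h
    · exact hsq (pow_two p ▸ mul_dvd_mul h (hsame.1 h))
    · exact hsq (pow_two p ▸ mul_dvd_mul (hsame.2 h) h)
  · simp only [hx, not_false_eq_true, true_and]
    exact exactlyDivides_mul_iff hp fun h =>
      hx (dvd_of_dvd_sub_mul_of_dvd_add_mul hp hp2 hJp h.1 h.2)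

theorem exists_dvd_sq_add_one {p : ℕ} (hp : p.Prime) (hp4 : p % 4 ≠ 3) :
    ∃ i : ℤ, (p : ℤ) ∣ i ^ 2 + 1 := by
  have := Fact.mk hp
  obtain ⟨z, hz⟩ := ZMod.exists_sq_eq_neg_one_iff.2 hp4
  refine ⟨z.val, (ZMod.intCast_zmod_eq_zero_iff_dvd _ p).1 ?_⟩
  push_cast
  rw [ZMod.natCast_zmod_val, sq, ← hz, neg_add_cancel]

/-- One Newton step `J = i - (i ^ 2 + 1) / (2 i)`, with `1 / 2 ≡ h + 1` and `1 / i ≡ -i` mod `k`. -/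
theorem exists_sq_dvd_sq_add_one_of_dvd {k i : ℤ} (hk : Odd k) (hi : k ∣ i ^ 2 + 1) :
    ∃ J : ℤ, k ^ 2 ∣ J ^ 2 + 1 := by
  obtain ⟨h, rfl⟩ := hk
  obtain ⟨t, ht⟩ := hi
  exact ⟨i + (2 * h + 1) * t * (i * (h + 1)), t * (t + i ^ 2) + t ^ 2 * (i * (h + 1)) ^ 2,
    by linear_combination (1 + (2 * h + 1) * t) * ht⟩

theorem exists_sq_dvd_sq_add_one {p : ℕ} (hp : p.Prime) (hp4 : p % 4 = 1) :
    ∃ J : ℤ, (p : ℤ) ^ 2 ∣ J ^ 2 + 1 := by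
  obtain ⟨i, hi⟩ := exists_dvd_sq_add_one hp (by omega)
  exact exists_sq_dvd_sq_add_one_of_dvd ⟨(p / 2 : ℕ), by omega⟩ hi

theorem not_natCast_dvd_two {p : ℕ} (hp : p.Prime) (hp4 : p % 4 = 1) : ¬ (p : ℤ) ∣ 2 := by
  intro h
  have := Int.le_of_dvd two_pos h
  have := hp.two_le
  omega

section SumsOfTwoSquares

variable {Q : ℤ} (a b : ℤ) (N : ℕ)

theorem countApprox_exactlyDivides_sq_add_sq {p : ℕ} (hp : p.Prime) (hp4 : p % 4 = 1)
    (hQ : IsCoprime Q p) :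
    CountApprox (Icc 1 N ×ˢ Icc 1 N)
      (fun mn : ℕ × ℕ => ExactlyDivides p ((Q * mn.1 + a) ^ 2 + (Q * mn.2 + b) ^ 2))
      (N ^ 2 * (2 / p * (1 - 1 / p) ^ 2)) (6 * N) := by
  obtain ⟨J, hJ⟩ := exists_sq_dvd_sq_add_one hp hp4
  have hpZ := Nat.prime_iff_prime_int.1 hp
  have hp2 := not_natCast_dvd_two hp hp4
  have hp' := natCast_inv_mem_unitInterval p
  have piece (K : ℤ) := (countApprox_not_dvd_mul_add hp.pos hQ a N).prod_Icc
    (fun m => countApprox_exactlyDivides_mul_add hp.pos hQ (b + K * (Q * m + a)) N)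
    (unitInterval.mul_mem hp' (Set.Icc.one_sub_mem hp'))
  refine (((piece (-J)).or (piece J) fun mn _ h h' => h.1 ?_).congr (fun mn _ => ?_)
    (by ring)).mono (by linarith)
  · refine dvd_of_dvd_sub_mul_of_dvd_add_mul hpZ hp2 ((dvd_pow_self _ two_ne_zero).trans hJ)
      (y := Q * mn.2 + b) ?_ (by rw [add_assoc]; exact h'.2.1)
    rw [sub_eq_add_neg, ← neg_mul, add_assoc]
    exact h.2.1
  · simp only [exactlyDivides_sq_add_sq_iff hpZ hp2 hJ, sub_eq_add_neg, ← neg_mul, add_assoc,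
      and_or_left]

theorem countApprox_exactlyDivides_sq_add_sq_and {p q : ℕ} (hp : p.Prime) (hq : q.Prime)
    (hp4 : p % 4 = 1) (hq4 : q % 4 = 1) (hpq : p ≠ q) (hQp : IsCoprime Q p)
    (hQq : IsCoprime Q q) :
    CountApprox (Icc 1 N ×ˢ Icc 1 N)
      (fun mn : ℕ × ℕ => ExactlyDivides p ((Q * mn.1 + a) ^ 2 + (Q * mn.2 + b) ^ 2) ∧
        ExactlyDivides q ((Q * mn.1 + a) ^ 2 + (Q * mn.2 + b) ^ 2))
      (N ^ 2 * (4 / (p * q) * (1 - 1 / p) ^ 2 * (1 - 1 / q) ^ 2)) (28 * N) := by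
  obtain ⟨J₁, hJ₁⟩ := exists_sq_dvd_sq_add_one hp hp4
  obtain ⟨J₂, hJ₂⟩ := exists_sq_dvd_sq_add_one hq hq4
  have hpq' : IsCoprime (p : ℤ) q :=
    Nat.isCoprime_iff_coprime.2 ((Nat.coprime_primes hp hq).2 hpq)
  have hp' := natCast_inv_mem_unitInterval p
  have hq' := natCast_inv_mem_unitInterval q
  have piece (K₁ K₂ : ℤ) :=
    (countApprox_not_dvd_and_not_dvd hp.pos hq.pos hQp hQq hpq' a N).prod_Icc
    (fun m => countApprox_exactlyDivides_and_exactlyDivides hp.pos hq.pos hQp hQq hpq'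
      (b + K₁ * (Q * m + a)) (b + K₂ * (Q * m + a)) N)
    (unitInterval.mul_mem (unitInterval.mul_mem hp' (Set.Icc.one_sub_mem hp'))
      (unitInterval.mul_mem hq' (Set.Icc.one_sub_mem hq')))
  have sign {r : ℕ} {J : ℤ} (hr : r.Prime) (hr4 : r % 4 = 1) (hJ : (r : ℤ) ^ 2 ∣ J ^ 2 + 1)
      (m n : ℕ) (h : (r : ℤ) ∣ Q * n + (b + -J * (Q * m + a)))
      (h' : (r : ℤ) ∣ Q * n + (b + J * (Q * m + a))) : (r : ℤ) ∣ Q * m + a := by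
    refine dvd_of_dvd_sub_mul_of_dvd_add_mul (Nat.prime_iff_prime_int.1 hr)
      (not_natCast_dvd_two hr hr4) ((dvd_pow_self _ two_ne_zero).trans hJ) (y := Q * n + b)
      ?_ (by rwa [add_assoc])
    rwa [sub_eq_add_neg, ← neg_mul, add_assoc]
  refine ((((piece (-J₁) (-J₂)).or (piece (-J₁) J₂)
      fun mn _ h h' => h.1.2 (sign hq hq4 hJ₂ mn.1 mn.2 h.2.2.1 h'.2.2.1)).or
    ((piece J₁ (-J₂)).or (piece J₁ J₂)
      fun mn _ h h' => h.1.2 (sign hq hq4 hJ₂ mn.1 mn.2 h.2.2.1 h'.2.2.1))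
    fun mn _ h h' => ?_).congr (fun mn _ => ?_) (by ring)).mono (by linarith)
  · rcases h with h | h <;> rcases h' with h' | h' <;>
      exact h.1.1 (sign hp hp4 hJ₁ mn.1 mn.2 h.2.1.1 h'.2.1.1)
  · simp only [exactlyDivides_sq_add_sq_iff (Nat.prime_iff_prime_int.1 hp)
      (not_natCast_dvd_two hp hp4) hJ₁, exactlyDivides_sq_add_sq_iff
      (Nat.prime_iff_prime_int.1 hq) (not_natCast_dvd_two hq hq4) hJ₂, sub_eq_add_neg,
      ← neg_mul, add_assoc]
    tauto

end SumsOfTwoSquares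

theorem abs_wPair_sub_le {Q N : ℕ} {a b : ℤ} {p q : ℕ} {ρ C : ℝ} (hN : 0 < N)
    (h : CountApprox (Icc 1 N ×ˢ Icc 1 N) (fun mn : ℕ × ℕ =>
      ExactlyDivides p (((Q : ℤ) * mn.1 + a) ^ 2 + ((Q : ℤ) * mn.2 + b) ^ 2) ∧
      ExactlyDivides q (((Q : ℤ) * mn.1 + a) ^ 2 + ((Q : ℤ) * mn.2 + b) ^ 2)) (N ^ 2 * ρ)
      (C * N)) :
    |wPair Q N a b p q - ρ| ≤ C / N := by
  have hN' : (0 : ℝ) < N := by exact_mod_cast hN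
  have hcount : |(wPair Q N a b p q - ρ) * N ^ 2| ≤ C * N := by
    unfold wPair CountApprox at *
    rw [sub_mul, div_mul_cancel₀ _ (by positivity), mul_comm ρ]
    convert h using 6
  rw [abs_mul, abs_of_pos (pow_pos hN' 2), sq, ← mul_assoc] at hcount
  rw [le_div_iff₀ hN']
  exact le_of_mul_le_mul_right hcount hN'

/-- **Lemma 4.1.** There is an absolute constant `C > 0` such that for all `Q, N ∈ ℕ`,
integers `a, b`, and primes `p, q ≡ 1 (mod 4)` with `gcd(pq, Q) = 1`:
`|w_{N,Q}(p,p) − (2/p)(1 − 1/p)²| ≤ C/N`, and if `p ≠ q` then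
`|w_{N,Q}(p,q) − (4/(pq))(1 − 1/p)²(1 − 1/q)²| ≤ C/N`. -/
theorem counting_exact_divisors_sums_of_squares :
    ∃ C : ℝ, 0 < C ∧
      ∀ (Q N : ℕ) (a b : ℤ) (p q : ℕ), 0 < Q → 0 < N →
        p.Prime → q.Prime → p % 4 = 1 → q % 4 = 1 → Nat.Coprime (p * q) Q →
        (|wPair Q N a b p p - (2 / (p : ℝ)) * (1 - 1 / (p : ℝ)) ^ 2| ≤ C / (N : ℝ)) ∧
        (p ≠ q →
          |wPair Q N a b p q -
            (4 / ((p : ℝ) * (q : ℝ))) * (1 - 1 / (p : ℝ)) ^ 2 * (1 - 1 / (q : ℝ)) ^ 2|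
            ≤ C / (N : ℝ)) := by
  refine ⟨28, by norm_num, fun Q N a b p q _ hN hp hq hp4 hq4 hpqQ => ?_⟩
  have hQp : IsCoprime (Q : ℤ) p :=
    (Nat.isCoprime_iff_coprime.2 (hpqQ.coprime_dvd_left (dvd_mul_right p q))).symm
  have hQq : IsCoprime (Q : ℤ) q :=
    (Nat.isCoprime_iff_coprime.2 (hpqQ.coprime_dvd_left (dvd_mul_left q p))).symm
  refine ⟨abs_wPair_sub_le hN ?_, fun hpq => abs_wPair_sub_le hN
    (countApprox_exactlyDivides_sq_add_sq_and a b N hp hq hp4 hq4 hpq hQp hQq)⟩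
  exact ((countApprox_exactlyDivides_sq_add_sq a b N hp hp4 hQp).congr
    (fun _ _ => and_self_iff.symm) rfl).mono (by linarith [N.cast_nonneg (α := ℝ)])
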